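/- arXiv:1106.4753 — 4 statements merged into one kernel-verified Lean document; each statement's English description precedes it below -/
import Mathlib

section
/- For a row R = (r_1,...,r_n) (a nondecreasing word on {1,...,n} encoded by letter multiplicities) and a letter x = p, Schensted's row insertion R·x equals: Rx if Rx is a row; otherwise y·R' where y is the leftmost letter of R strictly larger than x and R' is R with that occurrence of y replaced by x. Prove that this insertion coincides with the multiplicity-vector algorithm: writing Z = (0,...,0,1,0,...,0) with the 1 in position p, and defining x_1 = 0, x_k = min(Z_{k-1} - X_{k-1}, w_k) for k ≥ 2 (with capital letters denoting partial sums and W the vector of R), y_q = w_q + z_q - x_q, the outputs X, Y satisfy: if X = 0 then R·x is the row Y, and otherwise X is a single letter y and Y = R' as in Schensted's algorithm. -/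
open Finset

/-- Partial sum `Φ_p = φ_1 + ⋯ + φ_p` of a multiplicity vector. -/
def PS (f : ℕ → ℕ) (p : ℕ) : ℕ := ∑ i ∈ Finset.Icc 1 p, f i

/-- Partial sums `X_p` of the bumped row in the vector insertion `W·Z = X·Y`:
`X_0 = X_1 = 0`, `X_{p+1} = min(Z_p, X_p + w_{p+1})`. -/
def capX (W Z : ℕ → ℕ) : ℕ → ℕ
  | 0 => 0
  | p + 1 => if p = 0 then 0 else min (PS Z p) (capX W Z p + W (p + 1))

/-- Component `x_p = X_p - X_{p-1} = min(Z_{p-1} - X_{p-1}, w_p)` (with `x_1 = 0`). -/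
def xcomp (W Z : ℕ → ℕ) (p : ℕ) : ℕ := capX W Z p - capX W Z (p - 1)

/-- Component `y_q = w_q + z_q - x_q`. -/
def ycomp (W Z : ℕ → ℕ) (q : ℕ) : ℕ := W q + Z q - xcomp W Z q

/-- Schensted row insertion: `rowIns R x = (bumped letters, resulting row)`. -/
def rowIns : List ℕ → ℕ → List ℕ × List ℕ
  | [], x => ([], [x])
  | a :: R, x =>
      if x < a then ([a], x :: R)
      else ((rowIns R x).1, a :: (rowIns R x).2)

/-! For `Z` the single letter `p`, the recursion for `X` collapses to
`X_q = min(1, w_{p+1} + ⋯ + w_q)`, so `X` is either empty or the single smallest letter `y > p`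
of the row. Since a row is sorted, that `y` is also the first letter exceeding `p`, the one
Schensted's insertion bumps, and `y_q = w_q + z_q - x_q` then counts the row with `y` replaced
by `p`. -/

lemma PS_indicator {p : ℕ} (hp : 1 ≤ p) (q : ℕ) :
    PS (fun j => if j = p then 1 else 0) q = if p ≤ q then 1 else 0 := by
  rw [PS, Finset.sum_ite_eq']
  simp [hp]

lemma capX_indicator (W : ℕ → ℕ) {p : ℕ} (hp : 1 ≤ p) (q : ℕ) :
    capX W (fun j => if j = p then 1 else 0) q = min 1 (∑ j ∈ Ioc p q, W j) := by
  induction q with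
  | zero => simp [capX]
  | succ q ih =>
    rcases Nat.eq_zero_or_pos q with rfl | hq
    · simp [capX, Finset.Ioc_eq_empty_of_le hp]
    rw [capX, if_neg hq.ne', ih, PS_indicator hp]
    by_cases hpq : p ≤ q
    · rw [if_pos hpq, Finset.sum_Ioc_succ_top hpq]
      omega
    · rw [if_neg hpq, Finset.Ioc_eq_empty_of_le (show q + 1 ≤ p by omega)]
      simp

lemma xcomp_eq_of_capX_eq {W Z : ℕ → ℕ} {y : ℕ} (hy : 0 < y)
    (h : ∀ q, capX W Z q = if y ≤ q then 1 else 0) (i : ℕ) :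
    xcomp W Z i = if i = y then 1 else 0 := by
  simp only [xcomp, h]
  split_ifs <;> omega

lemma List.sum_count_eq_zero_of_forall_notMem {R : List ℕ} {s : Finset ℕ}
    (h : ∀ a ∈ R, a ∉ s) : ∑ j ∈ s, R.count j = 0 :=
  Finset.sum_eq_zero fun j hj => List.count_eq_zero.mpr fun hjR => h j hjR hj

lemma capX_count_of_forall_le {R : List ℕ} {p : ℕ} (hp : 1 ≤ p) (h : ∀ a ∈ R, a ≤ p)
    (q : ℕ) : capX (fun j => R.count j) (fun j => if j = p then 1 else 0) q = 0 := by
  rw [capX_indicator _ hp, List.sum_count_eq_zero_of_forall_notMem fun a ha haI => ?_,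
    Nat.min_zero]
  exact absurd (h a ha) (by simp at haI; omega)

lemma capX_count_append_cons {A B : List ℕ} {p y : ℕ} (hp : 1 ≤ p) (hA : ∀ a ∈ A, a ≤ p)
    (hpy : p < y) (hyB : ∀ b ∈ B, y ≤ b) (q : ℕ) :
    capX (fun j => (A ++ y :: B).count j) (fun j => if j = p then 1 else 0) q
      = if y ≤ q then 1 else 0 := by
  rw [capX_indicator _ hp]
  split_ifs with hyq
  · have hy : 0 < (A ++ y :: B).count y := List.count_pos_iff.mpr (by simp)
    have := Finset.single_le_sum (f := fun j => (A ++ y :: B).count j)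
      (fun _ _ => Nat.zero_le _) (Finset.mem_Ioc.mpr ⟨hpy, hyq⟩)
    omega
  · rw [List.sum_count_eq_zero_of_forall_notMem fun a ha haI => ?_, Nat.min_zero]
    rw [Finset.mem_Ioc] at haI
    rcases List.mem_append.mp ha with haA | ha
    · exact absurd (hA a haA) (by omega)
    rcases List.mem_cons.mp ha with rfl | haB
    · omega
    · exact absurd (hyB a haB) (by omega)

lemma rowIns_of_forall_le {R : List ℕ} {x : ℕ} (h : ∀ a ∈ R, a ≤ x) :
    rowIns R x = ([], R ++ [x]) := by
  induction R with
  | nil => rfl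
  | cons a R ih =>
    simp [rowIns, (h a List.mem_cons_self).not_gt,
      ih fun b hb => h b (List.mem_cons_of_mem a hb)]

lemma rowIns_append_cons {A B : List ℕ} {x y : ℕ} (hA : ∀ a ∈ A, a ≤ x) (hy : x < y) :
    rowIns (A ++ y :: B) x = ([y], A ++ x :: B) := by
  induction A with
  | nil => simp [rowIns, hy]
  | cons a A ih =>
    simp [rowIns, (hA a List.mem_cons_self).not_gt,
      ih fun b hb => hA b (List.mem_cons_of_mem a hb)]

lemma List.exists_eq_append_cons_of_exists_lt {R : List ℕ} {x : ℕ} (h : ∃ a ∈ R, x < a) :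
    ∃ A y B, R = A ++ y :: B ∧ (∀ a ∈ A, a ≤ x) ∧ x < y := by
  induction R with
  | nil => simp at h
  | cons a R ih =>
    by_cases hxa : x < a
    · exact ⟨[], a, R, rfl, by simp, hxa⟩
    · obtain ⟨b, hb, hxb⟩ := h
      obtain ⟨A, y, B, rfl, hA, hxy⟩ :=
        ih ⟨b, (List.mem_cons.mp hb).resolve_left (by omega), hxb⟩
      refine ⟨a :: A, y, B, rfl, ?_, hxy⟩
      simpa [not_lt.mp hxa] using hA

theorem schensted_eq_vector_insertion_general (n : ℕ) (R : List ℕ) (p : ℕ)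
    (hR : List.Pairwise (· ≤ ·) R)
    (hp1 : 1 ≤ p) :
    ∀ i, 1 ≤ i → i ≤ n →
      xcomp (fun j => R.count j) (fun j => if j = p then 1 else 0) i
        = (rowIns R p).1.count i ∧
      ycomp (fun j => R.count j) (fun j => if j = p then 1 else 0) i
        = (rowIns R p).2.count i := by
  intro i _ _
  by_cases hbump : ∃ a ∈ R, p < a
  · obtain ⟨A, y, B, rfl, hA, hpy⟩ := List.exists_eq_append_cons_of_exists_lt hbump
    have hyB : ∀ b ∈ B, y ≤ b := (List.pairwise_cons.mp (List.pairwise_append.mp hR).2.1).1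
    rw [rowIns_append_cons hA hpy, ycomp,
      xcomp_eq_of_capX_eq (by omega) (capX_count_append_cons hp1 hA hpy hyB)]
    simp only [List.count_append, List.count_cons, List.count_nil, beq_iff_eq]
    constructor <;> split_ifs <;> omega
  · push Not at hbump
    rw [rowIns_of_forall_le hbump, ycomp, xcomp, capX_count_of_forall_le hp1 hbump,
      capX_count_of_forall_le hp1 hbump]
    simp only [List.count_append, List.count_cons, List.count_nil, beq_iff_eq]
    refine ⟨trivial, ?_⟩
    split_ifs <;> omega

/-- Schensted's row insertion coincides with the multiplicity-vector algorithm: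
if `X = 0` then `R·x` is the row `Y`, and otherwise `X` is the single bumped
letter `y` and `Y = R'`. -/
theorem schensted_eq_vector_insertion (n : ℕ) (R : List ℕ) (p : ℕ)
    (hR : List.Pairwise (· ≤ ·) R) (hRmem : ∀ a ∈ R, 1 ≤ a ∧ a ≤ n)
    (hp1 : 1 ≤ p) (hpn : p ≤ n) :
    ∀ i, 1 ≤ i → i ≤ n →
      xcomp (fun j => R.count j) (fun j => if j = p then 1 else 0) i
        = (rowIns R p).1.count i ∧
      ycomp (fun j => R.count j) (fun j => if j = p then 1 else 0) i
        = (rowIns R p).2.count i :=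
  schensted_eq_vector_insertion_general n R p hR hp1
end

section
/- With W, Z rows and (X, Y) the output of the vector insertion algorithm (x_1 = 0, x_p = min(Z_{p-1} - X_{p-1}, w_p), y_q = w_q + z_q - x_q), prove that Y is a row and X dominates Y, i.e., |X| ≤ |Y| and for every position j, the j-th letter of the word of X is strictly greater than the j-th letter of the word of Y; equivalently, X_p ≤ Y_{p-1} for all 2 ≤ p ≤ n and X_1 = 0. In particular X·Y is a (two-row) Young tableau (or X = 0 and Y is a single row). -/
/-!
Letters are conserved, `Y_p + X_p = W_p + Z_p`. Since `X_{p+1} ≤ Z_p` and `X_p ≤ W_p`, this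
gives `X_{p+1} ≤ Y_p`; as `X` is monotone, also `|X| = X_n ≤ X_{n+1} ≤ Y_n = |Y|`.
-/

open Finset

lemma PS_succ (f : ℕ → ℕ) (p : ℕ) : PS f (p + 1) = PS f p + f (p + 1) :=
  Finset.sum_Icc_succ_top (by omega) f

section capX

variable (W Z : ℕ → ℕ)

lemma capX_succ_of_ne_zero {p : ℕ} (hp : p ≠ 0) :
    capX W Z (p + 1) = min (PS Z p) (capX W Z p + W (p + 1)) := by
  simp [capX, hp]

lemma capX_succ_le_PS (p : ℕ) : capX W Z (p + 1) ≤ PS Z p := by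
  rcases Nat.eq_zero_or_pos p with rfl | hp
  · simp [capX]
  · exact (capX_succ_of_ne_zero W Z hp.ne').le.trans (min_le_left _ _)

lemma capX_succ_le_add (p : ℕ) : capX W Z (p + 1) ≤ capX W Z p + W (p + 1) := by
  rcases Nat.eq_zero_or_pos p with rfl | hp
  · simp [capX]
  · exact (capX_succ_of_ne_zero W Z hp.ne').le.trans (min_le_right _ _)

lemma capX_le_succ (p : ℕ) : capX W Z p ≤ capX W Z (p + 1) := by
  cases p with
  | zero => simp [capX]
  | succ q =>
    rw [capX_succ_of_ne_zero W Z (by omega : q + 1 ≠ 0), PS_succ]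
    have := capX_succ_le_PS W Z q
    exact le_min (by omega) (by omega)

lemma capX_le_PS (p : ℕ) : capX W Z p ≤ PS W p := by
  induction p with
  | zero => simp [capX]
  | succ q ih =>
    calc capX W Z (q + 1) ≤ capX W Z q + W (q + 1) := capX_succ_le_add W Z q
      _ ≤ PS W q + W (q + 1) := by omega
      _ = PS W (q + 1) := (PS_succ W q).symm

lemma PS_ycomp_add_capX (p : ℕ) :
    PS (ycomp W Z) p + capX W Z p = PS W p + PS Z p := by
  induction p with
  | zero => simp [PS, capX]
  | succ q ih =>
    have hmono := capX_le_succ W Z q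
    have hstep := capX_succ_le_add W Z q
    have hx : xcomp W Z (q + 1) = capX W Z (q + 1) - capX W Z q := rfl
    have hy : ycomp W Z (q + 1) = W (q + 1) + Z (q + 1) - xcomp W Z (q + 1) := rfl
    rw [PS_succ, PS_succ, PS_succ]
    omega

lemma capX_succ_le_PS_ycomp (p : ℕ) : capX W Z (p + 1) ≤ PS (ycomp W Z) p := by
  have hZ := capX_succ_le_PS W Z p
  have hW := capX_le_PS W Z p
  have hsum := PS_ycomp_add_capX W Z p
  omega

end capX

/-- The output `X·Y` of the vector insertion is a (two-row) Young tableau: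
`x_1 = 0`, `X_p ≤ Y_{p-1}` for `2 ≤ p ≤ n` (so `X` dominates `Y`, or `X = 0`),
and `|X| ≤ |Y|`. -/
theorem insertion_output_is_tableau (n : ℕ) (W Z : ℕ → ℕ) :
    capX W Z 1 = 0 ∧
    (∀ p, 2 ≤ p → p ≤ n → capX W Z p ≤ PS (ycomp W Z) (p - 1)) ∧
    capX W Z n ≤ PS (ycomp W Z) n := by
  refine ⟨rfl, fun p hp _ => ?_, (capX_le_succ W Z n).trans (capX_succ_le_PS_ycomp W Z n)⟩
  obtain ⟨q, rfl⟩ : ∃ q, p = q + 1 := ⟨p - 1, by omega⟩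
  exact capX_succ_le_PS_ycomp W Z q
end

section
/- In the setting of the two reduction orders of R·S·T, with D·B = E·F and G·I = K·L, prove that e_2 = l_2 = min(s_1 + t_1, t_1 + r_2, r_2 + s_2), where e_2 = min(b_1, d_2) and l_2 = g_2 + i_2. -/
open Finset

/-- `A` from `S·T = A·B`. -/
def rowA (S T : ℕ → ℕ) : ℕ → ℕ := xcomp S T
/-- `B` from `S·T = A·B`. -/
def rowB (S T : ℕ → ℕ) : ℕ → ℕ := ycomp S T
/-- `C` from `R·A = C·D`. -/
def rowC (R S T : ℕ → ℕ) : ℕ → ℕ := xcomp R (rowA S T)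
/-- `D` from `R·A = C·D`. -/
def rowD (R S T : ℕ → ℕ) : ℕ → ℕ := ycomp R (rowA S T)
/-- `E` from `D·B = E·F`. -/
def rowE (R S T : ℕ → ℕ) : ℕ → ℕ := xcomp (rowD R S T) (rowB S T)
/-- `F` from `D·B = E·F`. -/
def rowF (R S T : ℕ → ℕ) : ℕ → ℕ := ycomp (rowD R S T) (rowB S T)
/-- `G` from `R·S = G·H`. -/
def rowG (R S : ℕ → ℕ) : ℕ → ℕ := xcomp R S
/-- `H` from `R·S = G·H`. -/
def rowH (R S : ℕ → ℕ) : ℕ → ℕ := ycomp R S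
/-- `I` from `H·T = I·J`. -/
def rowI (R S T : ℕ → ℕ) : ℕ → ℕ := xcomp (rowH R S) T
/-- `J` from `H·T = I·J`. -/
def rowJ (R S T : ℕ → ℕ) : ℕ → ℕ := ycomp (rowH R S) T
/-- `K` from `G·I = K·L`. -/
def rowK (R S T : ℕ → ℕ) : ℕ → ℕ := xcomp (rowG R S) (rowI R S T)
/-- `L` from `G·I = K·L`. -/
def rowL (R S T : ℕ → ℕ) : ℕ → ℕ := ycomp (rowG R S) (rowI R S T)

/-! Only the first two entries of the rows enter `e_2` and `l_2`. At index 2 an insertion `W·Z = X·Y`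
gives `x_2 = min(z_1, w_2)` and `y_1 = w_1 + z_1`, and since every bumped row starts with `x_1 = 0`,
a row inserted into a bumped row is not bumped at index 2. Hence `e_2 = min(s_1 + t_1, r_2 + min(t_1, s_2))`
and `l_2 = min(s_1, r_2) + min(t_1, r_2 + s_2 - min(s_1, r_2))`, which agree by a case analysis. -/

lemma PS_one (Z : ℕ → ℕ) : PS Z 1 = Z 1 := by simp [PS]

lemma capX_one (W Z : ℕ → ℕ) : capX W Z 1 = 0 := rfl

lemma capX_two (W Z : ℕ → ℕ) : capX W Z 2 = min (Z 1) (W 2) := by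
  simp [capX, PS_one]

lemma xcomp_one (W Z : ℕ → ℕ) : xcomp W Z 1 = 0 := rfl

lemma xcomp_two (W Z : ℕ → ℕ) : xcomp W Z 2 = min (Z 1) (W 2) := by
  simp [xcomp, capX_one, capX_two]

lemma ycomp_one (W Z : ℕ → ℕ) : ycomp W Z 1 = W 1 + Z 1 := by
  simp [ycomp, xcomp_one]

lemma ycomp_xcomp_two (W V Z : ℕ → ℕ) : ycomp W (xcomp V Z) 2 = W 2 + xcomp V Z 2 := by
  simp [ycomp, xcomp_two, xcomp_one]

lemma rowE_two (R S T : ℕ → ℕ) :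
    rowE R S T 2 = min (S 1 + T 1) (R 2 + min (T 1) (S 2)) := by
  rw [rowE, xcomp_two, rowB, ycomp_one, rowD, rowA, ycomp_xcomp_two, xcomp_two]

lemma rowL_two (R S T : ℕ → ℕ) :
    rowL R S T 2 = min (S 1) (R 2) + min (T 1) (R 2 + S 2 - min (S 1) (R 2)) := by
  rw [rowL, rowI, ycomp_xcomp_two, xcomp_two, rowH, ycomp, rowG, xcomp_two]

theorem e2_eq_l2_general (R S T : ℕ → ℕ) :
    rowE R S T 2 = rowL R S T 2 ∧
    rowE R S T 2 = min (S 1 + T 1) (min (T 1 + R 2) (R 2 + S 2)) := by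
  rw [rowE_two, rowL_two]
  omega

/-- `e_2 = l_2 = min(s_1 + t_1, t_1 + r_2, r_2 + s_2)`. -/
theorem e2_eq_l2 (n : ℕ) (hn : 2 ≤ n) (R S T : ℕ → ℕ) :
    rowE R S T 2 = rowL R S T 2 ∧
    rowE R S T 2 = min (S 1 + T 1) (min (T 1 + R 2) (R 2 + S 2)) :=
  e2_eq_l2_general R S T
end

section
/- Prove that the set of Young tableaux on A = {1,...,n} is a set of normal forms for the plactic monoid sgp⟨A | Ω⟩: every element of the plactic monoid is represented by exactly one Young tableau (written as its row reading word, from bottom row to top, each row read left to right, with consecutive rows in domination order). -/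
/-- A row: a nondecreasing word. -/
def IsRow (r : List ℕ) : Prop := List.Pairwise (· ≤ ·) r

/-- A row `R` dominates a row `S`: `|R| ≤ |S|` and each letter of `R` is
strictly greater than the corresponding letter of `S`. -/
def Dominates (R S : List ℕ) : Prop :=
  R.length ≤ S.length ∧ ∀ i < R.length, S.getD i 0 < R.getD i 0

/-- One application of a Knuth relation inside a word:
`xzy = zxy` for `x ≤ y < z`, and `yxz = yzx` for `x < y ≤ z`. -/
inductive KnuthStep : List ℕ → List ℕ → Prop
  | left (u v : List ℕ) (x y z : ℕ) (h1 : x ≤ y) (h2 : y < z) :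
      KnuthStep (u ++ [x, z, y] ++ v) (u ++ [z, x, y] ++ v)
  | right (u v : List ℕ) (x y z : ℕ) (h1 : x < y) (h2 : y ≤ z) :
      KnuthStep (u ++ [y, x, z] ++ v) (u ++ [y, z, x] ++ v)

/-- The plactic congruence: the equivalence generated by the Knuth relations. -/
def PlacticEq : List ℕ → List ℕ → Prop := Relation.EqvGen KnuthStep

/-- A (row reading word of a) Young tableau on `{1, …, n}`: a concatenation
`R₁ R₂ ⋯ R_t` of nonempty rows with letters in `{1, …, n}` such that `R_i`
dominates `R_{i+1}` for each `i`. -/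
def IsTableauWord (n : ℕ) (w : List ℕ) : Prop :=
  ∃ rows : List (List ℕ), w = rows.flatten ∧
    (∀ r ∈ rows, r ≠ [] ∧ IsRow r ∧ ∀ a ∈ r, 1 ≤ a ∧ a ≤ n) ∧
    rows.Chain' Dominates

/-!
Schensted insertion. Inserting a word `w` letter by letter into a row `R` yields a new row `R'`
and the word `b` of bumped letters, with `R w ≡ b R'`; recursing on `b` builds a tableau `P(w)`
whose reading word is plactic-equivalent to `w`, the row bumping lemma giving domination between
consecutive rows. Conversely (Knuth), inserting the two sides of a Knuth relation into any row
gives the same row and plactic-equivalent bumped words, so `P` is constant on plactic classes;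
and the reading word of a tableau inserts back to that tableau. So `P(w)` is the only tableau
in the class of `w`.
-/

def rowInsert : List ℕ → ℕ → List ℕ × Option ℕ
  | [], x => ([x], none)
  | e :: r, x => if x < e then (x :: r, some e) else (e :: (rowInsert r x).1, (rowInsert r x).2)

theorem rowInsert_append {B C : List ℕ} {x : ℕ} (hB : ∀ e ∈ B, e ≤ x)
    (hC : ∀ c ∈ C.head?, x < c) : rowInsert (B ++ C) x = (B ++ x :: C.tail, C.head?) := by
  induction B with
  | nil => cases C <;> simp_all [rowInsert]
  | cons e B ih =>
    simp [rowInsert, not_lt.2 (hB e (by simp)), ih fun a ha => hB a (by simp [ha])]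

theorem rowInsert_bump {B C : List ℕ} {x b : ℕ} (hB : ∀ e ∈ B, e ≤ x) (hxb : x < b) :
    rowInsert (B ++ b :: C) x = (B ++ x :: C, some b) :=
  rowInsert_append hB (by simpa using hxb)

theorem rowInsert_of_forall_le {R : List ℕ} {x : ℕ} (h : ∀ e ∈ R, e ≤ x) :
    rowInsert R x = (R ++ [x], none) := by
  simpa using rowInsert_append (C := []) h (by simp)

theorem exists_append_of_isRow {R : List ℕ} (hR : IsRow R) (x : ℕ) :
    ∃ B C, R = B ++ C ∧ (∀ e ∈ B, e ≤ x) ∧ ∀ e ∈ C, x < e := by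
  induction R with
  | nil => exact ⟨[], [], by simp⟩
  | cons e R ih =>
    rw [IsRow, List.pairwise_cons] at hR
    by_cases hex : e ≤ x
    · obtain ⟨B, C, rfl, hB, hC⟩ := ih hR.2
      exact ⟨e :: B, C, rfl, List.forall_mem_cons.2 ⟨hex, hB⟩, hC⟩
    · refine ⟨[], e :: R, rfl, by simp, List.forall_mem_cons.2 ⟨by omega, fun a ha => ?_⟩⟩
      exact lt_of_lt_of_le (not_le.1 hex) (hR.1 a ha)

theorem isRow_rowInsert {R : List ℕ} (hR : IsRow R) (x : ℕ) : IsRow (rowInsert R x).1 := by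
  obtain ⟨B, C, rfl, hB, hC⟩ := exists_append_of_isRow hR x
  rw [rowInsert_append hB fun c hc => hC c (List.mem_of_mem_head? hc)]
  simp only [IsRow, List.pairwise_append, List.pairwise_cons, List.mem_cons,
    forall_eq_or_imp] at hR ⊢
  exact ⟨hR.1, ⟨fun e he => (hC e (List.mem_of_mem_tail he)).le,
    hR.2.1.sublist (List.tail_sublist C)⟩,
    fun a ha => ⟨hB a ha, fun b hb => hR.2.2 a ha b (List.mem_of_mem_tail hb)⟩⟩

theorem length_rowInsert (R : List ℕ) (x : ℕ) :
    (rowInsert R x).1.length + (rowInsert R x).2.toList.length = R.length + 1 := by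
  induction R with
  | nil => rfl
  | cons e R ih => by_cases h : x < e <;> simp [rowInsert, h]; omega

def rowInsertWord : List ℕ → List ℕ → List ℕ × List ℕ
  | R, [] => (R, [])
  | R, x :: w => ((rowInsertWord (rowInsert R x).1 w).1,
      (rowInsert R x).2.toList ++ (rowInsertWord (rowInsert R x).1 w).2)

@[simp] theorem rowInsertWord_nil (R : List ℕ) : rowInsertWord R [] = (R, []) := rfl

theorem rowInsertWord_cons {R R₁ : List ℕ} {x : ℕ} {o : Option ℕ} (w : List ℕ)
    (h : rowInsert R x = (R₁, o)) :
    rowInsertWord R (x :: w) = ((rowInsertWord R₁ w).1, o.toList ++ (rowInsertWord R₁ w).2) := by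
  simp [rowInsertWord, h]

theorem rowInsertWord_append (R u v : List ℕ) :
    rowInsertWord R (u ++ v) = ((rowInsertWord (rowInsertWord R u).1 v).1,
      (rowInsertWord R u).2 ++ (rowInsertWord (rowInsertWord R u).1 v).2) := by
  induction u generalizing R with
  | nil => rfl
  | cons x u ih => simp [rowInsertWord, ih]

theorem isRow_rowInsertWord {R : List ℕ} (hR : IsRow R) (w : List ℕ) :
    IsRow (rowInsertWord R w).1 := by
  induction w generalizing R with
  | nil => exact hR
  | cons x w ih => exact ih (isRow_rowInsert hR x)

theorem length_rowInsertWord (R w : List ℕ) :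
    (rowInsertWord R w).1.length + (rowInsertWord R w).2.length = R.length + w.length := by
  induction w generalizing R with
  | nil => simp
  | cons x w ih =>
    have := length_rowInsert R x
    simp only [rowInsertWord, List.length_append, List.length_cons]
    have := ih (rowInsert R x).1
    omega

theorem length_le_length_rowInsertWord (R w : List ℕ) :
    R.length ≤ (rowInsertWord R w).1.length := by
  induction w generalizing R with
  | nil => simp
  | cons x w ih =>
    have : (rowInsert R x).2.toList.length ≤ 1 := by cases (rowInsert R x).2 <;> simp
    have := length_rowInsert R x
    exact le_trans (by omega) (ih (rowInsert R x).1)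

theorem length_rowInsertWord_snd_lt {w : List ℕ} (hw : w ≠ []) :
    (rowInsertWord [] w).2.length < w.length := by
  obtain ⟨x, w, rfl⟩ := List.exists_cons_of_ne_nil hw
  rw [rowInsertWord_cons w (rowInsert_of_forall_le (R := []) (x := x) (by simp))]
  have := length_rowInsertWord [x] w
  have := length_le_length_rowInsertWord [x] w
  simp only [List.nil_append, Option.toList_none, List.length_cons] at *
  omega

theorem KnuthStep.append_left {u v : List ℕ} (h : KnuthStep u v) (a : List ℕ) :
    KnuthStep (a ++ u) (a ++ v) := by
  cases h with
  | left c d x y z h₁ h₂ => simpa using KnuthStep.left (a ++ c) d x y z h₁ h₂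
  | right c d x y z h₁ h₂ => simpa using KnuthStep.right (a ++ c) d x y z h₁ h₂

theorem KnuthStep.append_right {u v : List ℕ} (h : KnuthStep u v) (b : List ℕ) :
    KnuthStep (u ++ b) (v ++ b) := by
  cases h with
  | left c d x y z h₁ h₂ => simpa using KnuthStep.left c (d ++ b) x y z h₁ h₂
  | right c d x y z h₁ h₂ => simpa using KnuthStep.right c (d ++ b) x y z h₁ h₂

theorem KnuthStep.perm {u v : List ℕ} (h : KnuthStep u v) : u.Perm v := by
  cases h with
  | left c d x y z => exact ((List.Perm.swap z x [y]).append_left c).append_right d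
  | right c d x y z => exact (((List.Perm.swap z x []).cons y).append_left c).append_right d

theorem PlacticEq.refl (u : List ℕ) : PlacticEq u u := Relation.EqvGen.refl u

theorem PlacticEq.symm {u v : List ℕ} (h : PlacticEq u v) : PlacticEq v u :=
  Relation.EqvGen.symm _ _ h

theorem PlacticEq.trans {u v w : List ℕ} (h₁ : PlacticEq u v) (h₂ : PlacticEq v w) :
    PlacticEq u w :=
  Relation.EqvGen.trans _ _ _ h₁ h₂

theorem KnuthStep.placticEq {u v : List ℕ} (h : KnuthStep u v) : PlacticEq u v := .rel _ _ h

theorem placticEq_le {r : List ℕ → List ℕ → Prop} (hr : Equivalence r) (hstep : KnuthStep ≤ r) :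
    PlacticEq ≤ r :=
  @Relation.EqvGen.eqvGen_le _ _ _ hr.isEquiv hstep

theorem PlacticEq.map {f : List ℕ → List ℕ} (hf : ∀ u v, KnuthStep u v → KnuthStep (f u) (f v))
    {u v : List ℕ} (h : PlacticEq u v) : PlacticEq (f u) (f v) :=
  placticEq_le ((Relation.EqvGen.is_equivalence _).comap f) (fun u v huv => .rel _ _ (hf u v huv))
    u v h

theorem PlacticEq.perm {u v : List ℕ} (h : PlacticEq u v) : u.Perm v :=
  placticEq_le (List.Perm.eqv _) (fun _ _ huv => huv.perm) u v h

theorem PlacticEq.append {u u' v v' : List ℕ} (hu : PlacticEq u u') (hv : PlacticEq v v') :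
    PlacticEq (u ++ v) (u' ++ v') :=
  (hu.map fun _ _ h => h.append_right v).trans (hv.map fun _ _ h => h.append_left u')

theorem placticEq_cons_append_singleton {p x : ℕ} {C : List ℕ} (hC : IsRow (p :: C))
    (hx : x < p) : PlacticEq (p :: (C ++ [x])) (p :: x :: C) := by
  induction C generalizing p with
  | nil => exact .refl _
  | cons e C ih =>
    simp only [IsRow, List.pairwise_cons, List.mem_cons, forall_eq_or_imp] at hC
    have hslide : PlacticEq (e :: (C ++ [x])) (e :: x :: C) :=
      ih (List.pairwise_cons.2 hC.2) (lt_of_lt_of_le hx hC.1.1)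
    have hswap : KnuthStep ([] ++ [p, x, e] ++ C) ([] ++ [p, e, x] ++ C) :=
      .right [] C x p e hx hC.1.1
    simpa using ((PlacticEq.refl [p]).append hslide).trans hswap.placticEq.symm

theorem placticEq_append_cons_cons {A v : List ℕ} {b w : ℕ} (hA : IsRow (A ++ [w]))
    (hwb : w < b) : PlacticEq (A ++ b :: w :: v) (b :: (A ++ w :: v)) := by
  induction A using List.reverseRecOn generalizing w v with
  | nil => exact .refl _
  | append_singleton A e ih =>
    have hAe : IsRow (A ++ [e]) := hA.sublist (List.sublist_append_left _ _)
    have hew : e ≤ w := List.pairwise_append.1 hA |>.2.2 e (by simp) w (by simp)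
    have hswap : PlacticEq (A ++ e :: b :: w :: v) (A ++ b :: e :: w :: v) := by
      simpa using (KnuthStep.left A v e w b hew hwb).placticEq
    simpa using hswap.trans (ih hAe (lt_of_le_of_lt hew hwb) (v := w :: v))

theorem placticEq_rowInsert {R : List ℕ} (hR : IsRow R) (x : ℕ) :
    PlacticEq (R ++ [x]) ((rowInsert R x).2.toList ++ (rowInsert R x).1) := by
  obtain ⟨A, D, rfl, hA, hD⟩ := exists_append_of_isRow hR x
  cases D with
  | nil => simpa [rowInsert_of_forall_le (by simpa using hA)] using PlacticEq.refl (A ++ [x])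
  | cons b C =>
    have hxb : x < b := hD b (by simp)
    rw [rowInsert_bump hA hxb]
    have hAx : IsRow (A ++ [x]) :=
      List.pairwise_append.2 ⟨hR.sublist (List.sublist_append_left _ _), by simp, by simpa using hA⟩
    have hslide := placticEq_cons_append_singleton (hR.sublist (List.sublist_append_right A _)) hxb
    simpa using
      ((PlacticEq.refl A).append hslide).trans (placticEq_append_cons_cons (v := C) hAx hxb)

theorem placticEq_rowInsertWord {R : List ℕ} (hR : IsRow R) (w : List ℕ) :
    PlacticEq (R ++ w) ((rowInsertWord R w).2 ++ (rowInsertWord R w).1) := by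
  induction w generalizing R with
  | nil => simpa using PlacticEq.refl R
  | cons x w ih =>
    have hx : PlacticEq (R ++ x :: w) ((rowInsert R x).2.toList ++ ((rowInsert R x).1 ++ w)) := by
      simpa using (placticEq_rowInsert hR x).append (PlacticEq.refl w)
    simpa [rowInsertWord] using hx.trans ((PlacticEq.refl _).append (ih (isRow_rowInsert hR x)))

def RowInsertEquiv (u v : List ℕ) : Prop :=
  ∀ R, IsRow R → (rowInsertWord R u).1 = (rowInsertWord R v).1 ∧
    PlacticEq (rowInsertWord R u).2 (rowInsertWord R v).2

theorem RowInsertEquiv.equivalence : Equivalence RowInsertEquiv where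
  refl _ _ _ := ⟨rfl, .refl _⟩
  symm h R hR := ⟨(h R hR).1.symm, (h R hR).2.symm⟩
  trans h₁ h₂ R hR := ⟨(h₁ R hR).1.trans (h₂ R hR).1, (h₁ R hR).2.trans (h₂ R hR).2⟩

theorem RowInsertEquiv.append_append {t t' : List ℕ} (h : RowInsertEquiv t t') (a c : List ℕ) :
    RowInsertEquiv (a ++ t ++ c) (a ++ t' ++ c) := by
  intro R hR
  obtain ⟨hrow, hbump⟩ := h _ (isRow_rowInsertWord hR a)
  simp only [rowInsertWord_append, hrow, true_and]
  exact ((PlacticEq.refl _).append hbump).append (.refl _)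

theorem rowInsertWord_pair {A C₁ C₂ : List ℕ} {x p z : ℕ} (hA : ∀ e ∈ A, e ≤ x) (hxp : x < p)
    (hpz : p ≤ z) (hC₁ : ∀ e ∈ C₁, e ≤ z) (hC₂ : ∀ c ∈ C₂.head?, z < c) :
    rowInsertWord (A ++ p :: (C₁ ++ C₂)) [x, z] =
        (A ++ x :: (C₁ ++ z :: C₂.tail), p :: C₂.head?.toList) ∧
      rowInsertWord (A ++ p :: (C₁ ++ C₂)) [z, x] =
        (A ++ x :: (C₁ ++ z :: C₂.tail), C₂.head?.toList ++ [p]) := by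
  have hAz : ∀ e ∈ A, e ≤ z := fun e he => (hA e he).trans (hxp.le.trans hpz)
  have hz₁ : rowInsert (A ++ x :: (C₁ ++ C₂)) z = (A ++ x :: (C₁ ++ z :: C₂.tail), C₂.head?) := by
    simpa using rowInsert_append (B := A ++ x :: C₁)
      (List.forall_mem_append.2 ⟨hAz, List.forall_mem_cons.2 ⟨by omega, hC₁⟩⟩) hC₂
  have hz₂ : rowInsert (A ++ p :: (C₁ ++ C₂)) z = (A ++ p :: (C₁ ++ z :: C₂.tail), C₂.head?) := by
    simpa using rowInsert_append (B := A ++ p :: C₁)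
      (List.forall_mem_append.2 ⟨hAz, List.forall_mem_cons.2 ⟨hpz, hC₁⟩⟩) hC₂
  constructor
  · rw [rowInsertWord_cons _ (rowInsert_bump hA hxp), rowInsertWord_cons _ hz₁]
    simp
  · rw [rowInsertWord_cons _ hz₂, rowInsertWord_cons _ (rowInsert_bump hA hxp)]
    simp

theorem exists_rowInsert_snd_eq_some {S : List ℕ} (hS : IsRow S) {y z : ℕ} (hz : z ∈ S)
    (hyz : y < z) : ∃ r ∈ S, y < r ∧ r ≤ z ∧ (rowInsert S y).2 = some r := by
  obtain ⟨B, E, rfl, hB, hE⟩ := exists_append_of_isRow hS y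
  have hzE : z ∈ E := (List.mem_append.1 hz).resolve_left fun h => (hB z h).not_gt hyz
  obtain ⟨r, E, rfl⟩ := List.exists_cons_of_ne_nil (List.ne_nil_of_mem hzE)
  have hr : r ≤ z := by
    rcases List.mem_cons.1 hzE with rfl | h
    · exact le_rfl
    · exact List.rel_of_pairwise_cons (hS.sublist (List.sublist_append_right _ _)) h
  exact ⟨r, by simp, hE r (by simp), hr, by rw [rowInsert_bump hB (hE r (by simp))]⟩

theorem rowInsertWord_left_of_forall_le {R : List ℕ} {x y z : ℕ} (hR : ∀ e ∈ R, e ≤ x)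
    (hxy : x ≤ y) (hyz : y < z) :
    rowInsertWord R [x, z, y] = (R ++ [x, y], [z]) ∧
      rowInsertWord R [z, x, y] = (R ++ [x, y], [z]) := by
  have hRy : ∀ e ∈ R ++ [x], e ≤ y :=
    List.forall_mem_append.2 ⟨fun e he => (hR e he).trans hxy, List.forall_mem_singleton.2 hxy⟩
  have hRz : ∀ e ∈ R, e ≤ z := fun e he => (hR e he).trans (by omega)
  constructor
  · rw [rowInsertWord_cons _ (rowInsert_of_forall_le hR),
      rowInsertWord_cons _ (rowInsert_of_forall_le fun e he => (hRy e he).trans hyz.le),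
      rowInsertWord_cons _ (rowInsert_bump (C := []) hRy hyz)]
    simp
  · rw [rowInsertWord_cons _ (rowInsert_of_forall_le hRz),
      rowInsertWord_cons _ (rowInsert_bump (C := []) hR (hxy.trans_lt hyz)),
      rowInsertWord_cons _ (rowInsert_of_forall_le hRy)]
    simp

theorem rowInsertWord_left_of_bump_le {A C : List ℕ} {x y z p : ℕ} (hR : IsRow (A ++ p :: C))
    (hA : ∀ e ∈ A, e ≤ x) (hxp : x < p) (hpz : p ≤ z) (hxy : x ≤ y) (hyz : y < z) :
    (rowInsertWord (A ++ p :: C) [x, z, y]).1 = (rowInsertWord (A ++ p :: C) [z, x, y]).1 ∧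
      PlacticEq (rowInsertWord (A ++ p :: C) [x, z, y]).2
        (rowInsertWord (A ++ p :: C) [z, x, y]).2 := by
  have hpC : IsRow (p :: C) := hR.sublist (List.sublist_append_right A _)
  obtain ⟨C₁, C₂, rfl, hC₁, hC₂⟩ := exists_append_of_isRow (List.pairwise_cons.1 hpC).2 z
  obtain ⟨hxz, hzx⟩ :=
    rowInsertWord_pair hA hxp hpz hC₁ fun c hc => hC₂ c (List.mem_of_mem_head? hc)
  rw [show [x, z, y] = [x, z] ++ [y] from rfl, show [z, x, y] = [z, x] ++ [y] from rfl,
    rowInsertWord_append, rowInsertWord_append, hxz, hzx]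
  refine ⟨rfl, ?_⟩
  rcases C₂ with _ | ⟨q, C₃⟩
  · simpa using PlacticEq.refl _
  have hS : IsRow (A ++ x :: (C₁ ++ z :: C₃)) := by
    simpa [hxz] using isRow_rowInsertWord hR [x, z]
  obtain ⟨r, hrS, hyr, hrz, hr⟩ := exists_rowInsert_snd_eq_some hS (z := z) (by simp) hyz
  have hpr : p ≤ r := by
    have hp : ∀ e ∈ C₁ ++ q :: C₃, p ≤ e := fun e => List.rel_of_pairwise_cons hpC
    simp only [List.mem_append, List.mem_cons] at hrS
    rcases hrS with h | rfl | h | rfl | h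
    · exact absurd (hA r h) (by omega)
    · omega
    · exact hp r (by simp [h])
    · exact hpz
    · exact hp r (by simp [h])
  have hzq : z < q := hC₂ q (by simp)
  -- the bumped words are `p q r` and `q p r`, with `p ≤ r < q`
  simpa [rowInsertWord, hr] using (KnuthStep.left [] [] p r q hpr (by omega)).placticEq

theorem rowInsertWord_left_of_lt_bump {A C : List ℕ} {x y z p : ℕ} (hR : IsRow (A ++ p :: C))
    (hA : ∀ e ∈ A, e ≤ x) (hzp : z < p) (hxy : x ≤ y) (hyz : y < z) :
    (rowInsertWord (A ++ p :: C) [x, z, y]).1 = (rowInsertWord (A ++ p :: C) [z, x, y]).1 ∧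
      PlacticEq (rowInsertWord (A ++ p :: C) [x, z, y]).2
        (rowInsertWord (A ++ p :: C) [z, x, y]).2 := by
  have hpC : ∀ e ∈ C, p ≤ e := fun e =>
    List.rel_of_pairwise_cons (hR.sublist (List.sublist_append_right A _))
  have hAx : ∀ e ∈ A ++ [x], e ≤ y :=
    List.forall_mem_append.2 ⟨fun e he => (hA e he).trans hxy, List.forall_mem_singleton.2 hxy⟩
  have hCz : ∀ c ∈ C.head?, z < c := fun c hc => hzp.trans_le (hpC c (List.mem_of_mem_head? hc))
  have hxz : rowInsert (A ++ x :: C) z = (A ++ x :: z :: C.tail, C.head?) := by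
    simpa using rowInsert_append (fun e he => (hAx e he).trans hyz.le) hCz
  have hyz' : rowInsert (A ++ x :: z :: C.tail) y = (A ++ x :: y :: C.tail, some z) := by
    simpa using rowInsert_bump (C := C.tail) hAx hyz
  have hxy' : rowInsert (A ++ x :: C) y = (A ++ x :: y :: C.tail, C.head?) := by
    simpa using rowInsert_append hAx fun c hc => hyz.trans (hCz c hc)
  rw [rowInsertWord_cons _ (rowInsert_bump hA (by omega)), rowInsertWord_cons _ hxz,
    rowInsertWord_cons _ hyz',
    rowInsertWord_cons _ (rowInsert_bump (fun e he => (hAx e (by simp [he])).trans hyz.le) hzp),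
    rowInsertWord_cons _ (rowInsert_bump hA (hxy.trans_lt hyz)), rowInsertWord_cons _ hxy']
  refine ⟨rfl, ?_⟩
  rcases C with _ | ⟨q, C⟩
  · simpa using PlacticEq.refl _
  -- the bumped words are `p q z` and `p z q`: a Knuth relation of the other kind
  · simpa using (KnuthStep.right [] [] z p q hzp (hpC q (by simp))).placticEq.symm

theorem rowInsertEquiv_left {x y z : ℕ} (hxy : x ≤ y) (hyz : y < z) :
    RowInsertEquiv [x, z, y] [z, x, y] := by
  intro R hR
  obtain ⟨A, D, rfl, hA, hD⟩ := exists_append_of_isRow hR x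
  rcases D with _ | ⟨p, C⟩
  · obtain ⟨h₁, h₂⟩ := rowInsertWord_left_of_forall_le (R := A ++ []) (by simpa using hA) hxy hyz
    rw [h₁, h₂]
    exact ⟨rfl, .refl _⟩
  by_cases hpz : p ≤ z
  · exact rowInsertWord_left_of_bump_le hR hA (hD p (by simp)) hpz hxy hyz
  · exact rowInsertWord_left_of_lt_bump hR hA (by omega) hxy hyz

theorem rowInsertEquiv_right {x y z : ℕ} (hxy : x < y) (hyz : y ≤ z) :
    RowInsertEquiv [y, x, z] [y, z, x] := by
  intro R hR
  obtain ⟨A', C', rfl, hA', hC'⟩ := exists_append_of_isRow hR y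
  have hy : rowInsert (A' ++ C') y = (A' ++ y :: C'.tail, C'.head?) :=
    rowInsert_append hA' fun c hc => hC' c (List.mem_of_mem_head? hc)
  have hR₁ : IsRow (A' ++ y :: C'.tail) := by simpa [hy] using isRow_rowInsert hR y
  obtain ⟨A, D, hAD, hA, hD⟩ := exists_append_of_isRow hR₁ x
  have hyD : y ∈ D := by
    have : y ∈ A ++ D := hAD ▸ by simp
    exact (List.mem_append.1 this).resolve_left fun h => (hA y h).not_gt hxy
  obtain ⟨p, C, rfl⟩ := List.exists_cons_of_ne_nil (List.ne_nil_of_mem hyD)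
  have hpC : IsRow (p :: C) :=
    (hAD ▸ hR₁ : IsRow (A ++ p :: C)).sublist (List.sublist_append_right A _)
  have hpy : p ≤ y := by
    rcases List.mem_cons.1 hyD with h | h
    · exact h.ge
    · exact List.rel_of_pairwise_cons hpC h
  obtain ⟨C₁, C₂, rfl, hC₁, hC₂⟩ := exists_append_of_isRow (List.pairwise_cons.1 hpC).2 z
  obtain ⟨hxz, hzx⟩ := rowInsertWord_pair hA (hD p (by simp)) (hpy.trans hyz) hC₁
    fun c hc => hC₂ c (List.mem_of_mem_head? hc)
  rw [rowInsertWord_cons _ hy, rowInsertWord_cons _ hy, hAD, hxz, hzx]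
  refine ⟨rfl, ?_⟩
  rcases C₂ with _ | ⟨q, C₃⟩
  · simpa using PlacticEq.refl _
  have hzq : z < q := hC₂ q (by simp)
  have hq : q ∈ C'.tail := by
    have : q ∈ A' ++ y :: C'.tail := hAD ▸ by simp
    simp only [List.mem_append, List.mem_cons] at this
    rcases this with h | rfl | h
    · exact absurd (hA' q h) (by omega)
    · omega
    · exact h
  obtain ⟨r, C', rfl⟩ := List.exists_cons_of_ne_nil (List.ne_nil_of_mem (List.mem_of_mem_tail hq))
  have hrq : r ≤ q := List.rel_of_pairwise_cons (hR.sublist (List.sublist_append_right A' _)) hq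
  have hyr : y < r := hC' r (by simp)
  -- the bumped words are `r p q` and `r q p`, with `p < r ≤ q`
  simpa using (KnuthStep.right [] [] p r q (by omega) hrq).placticEq

theorem KnuthStep.rowInsertEquiv {u v : List ℕ} (h : KnuthStep u v) : RowInsertEquiv u v := by
  cases h with
  | left a c x y z h₁ h₂ => exact (rowInsertEquiv_left h₁ h₂).append_append a c
  | right a c x y z h₁ h₂ => exact (rowInsertEquiv_right h₁ h₂).append_append a c

theorem PlacticEq.rowInsertEquiv {u v : List ℕ} (h : PlacticEq u v) : RowInsertEquiv u v :=
  placticEq_le RowInsertEquiv.equivalence (fun _ _ huv => huv.rowInsertEquiv) u v h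

theorem dominates_nil (S : List ℕ) : Dominates [] S := ⟨Nat.zero_le _, by simp⟩

theorem dominates_cons_cons {s r : ℕ} {S R : List ℕ} :
    Dominates (s :: S) (r :: R) ↔ r < s ∧ Dominates S R := by
  simp only [Dominates, List.length_cons, Nat.add_le_add_iff_right, Nat.forall_lt_succ_left,
    List.getD_cons_zero, List.getD_cons_succ]
  tauto

theorem Dominates.append_singleton {S R : List ℕ} (h : Dominates S R) (x : ℕ) :
    Dominates S (R ++ [x]) :=
  ⟨by simpa using h.1.trans (Nat.le_succ _), fun i hi => by
    rw [List.getD_append _ _ _ _ (hi.trans_le h.1)]; exact h.2 i hi⟩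

theorem lt_of_rowInsert_snd_eq_some {R : List ℕ} {x y : ℕ} (h : (rowInsert R x).2 = some y) :
    x < y := by
  induction R with
  | nil => simp [rowInsert] at h
  | cons e R ih =>
    by_cases hx : x < e
    · simp_all [rowInsert]
    · simp only [rowInsert, if_neg hx] at h
      exact ih h

theorem rowInsert_of_snd_eq_none {R : List ℕ} {x : ℕ} (h : (rowInsert R x).2 = none) :
    (rowInsert R x).1 = R ++ [x] := by
  induction R with
  | nil => rfl
  | cons e R ih =>
    by_cases hx : x < e
    · simp [rowInsert, hx] at h
    · simp only [rowInsert, if_neg hx] at h ⊢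
      rw [ih h, List.cons_append]

theorem Dominates.rowInsert_fst {S R : List ℕ} {x y : ℕ} (hd : Dominates S R)
    (h : (rowInsert R x).2 = some y) : Dominates S (rowInsert R x).1 := by
  induction R generalizing S with
  | nil => simp [rowInsert] at h
  | cons e R ih =>
    rcases S with _ | ⟨s, S⟩
    · exact dominates_nil _
    obtain ⟨hes, hd⟩ := dominates_cons_cons.1 hd
    by_cases hx : x < e
    · simp only [rowInsert, if_pos hx]
      exact dominates_cons_cons.2 ⟨hx.trans hes, hd⟩
    · simp only [rowInsert, if_neg hx] at h ⊢
      exact dominates_cons_cons.2 ⟨hes, ih hd h⟩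

theorem Dominates.rowInsert_rowInsert {S R : List ℕ} {x y : ℕ} (hd : Dominates S R)
    (h : (rowInsert R x).2 = some y) : Dominates (rowInsert S y).1 (rowInsert R x).1 := by
  induction R generalizing S with
  | nil => simp [rowInsert] at h
  | cons e R ih =>
    by_cases hx : x < e
    · simp only [rowInsert, if_pos hx, Option.some.injEq] at h ⊢
      subst h
      rcases S with _ | ⟨s, S⟩
      · exact dominates_cons_cons.2 ⟨hx, dominates_nil _⟩
      obtain ⟨hes, hd⟩ := dominates_cons_cons.1 hd
      simp only [rowInsert, if_pos hes]
      exact dominates_cons_cons.2 ⟨hx, hd⟩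
    · simp only [rowInsert, if_neg hx] at h ⊢
      have hxy := lt_of_rowInsert_snd_eq_some h
      rcases S with _ | ⟨s, S⟩
      · exact dominates_cons_cons.2 ⟨by omega, dominates_nil _⟩
      obtain ⟨hes, hd⟩ := dominates_cons_cons.1 hd
      by_cases hys : y < s
      · simp only [rowInsert, if_pos hys]
        exact dominates_cons_cons.2 ⟨by omega, hd.rowInsert_fst h⟩
      · simp only [rowInsert, if_neg hys]
        exact dominates_cons_cons.2 ⟨hes, ih hd h⟩

theorem Dominates.rowInsertWord_rowInsertWord {S' S : List ℕ} (hd : Dominates S' S) (w : List ℕ) :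
    Dominates (rowInsertWord S' (rowInsertWord S w).2).1 (rowInsertWord S w).1 := by
  induction w generalizing S S' with
  | nil => exact hd
  | cons x w ih =>
    simp only [rowInsertWord]
    cases h : (rowInsert S x).2 with
    | none =>
      simpa using ih (S := (rowInsert S x).1) (rowInsert_of_snd_eq_none h ▸ hd.append_singleton x)
    | some y => simpa [rowInsertWord] using ih (hd.rowInsert_rowInsert h)

theorem rowInsertWord_append_of_dominates {A K L : List ℕ} (hAL : IsRow (A ++ L))
    (h : Dominates K L) : rowInsertWord (A ++ K) L = (A ++ L, K) := by
  induction L generalizing A K with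
  | nil =>
    obtain rfl : K = [] := List.eq_nil_of_length_eq_zero (Nat.le_zero.1 h.1)
    rfl
  | cons s L ih =>
    have hAs : ∀ e ∈ A, e ≤ s := fun e he => List.pairwise_append.1 hAL |>.2.2 e he s (by simp)
    have hAL' : IsRow (A ++ [s] ++ L) := by simpa using hAL
    rcases K with _ | ⟨k, K⟩
    · rw [List.append_nil, rowInsertWord_cons _ (rowInsert_of_forall_le hAs)]
      simpa using ih hAL' (dominates_nil L)
    · obtain ⟨hsk, hKL⟩ := dominates_cons_cons.1 h
      have := ih hAL' hKL
      simp only [List.append_assoc, List.singleton_append] at this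
      rw [rowInsertWord_cons _ (rowInsert_bump hAs hsk), this]
      rfl

theorem rowInsertWord_of_dominates {K L : List ℕ} (hL : IsRow L) (h : Dominates K L) :
    rowInsertWord K L = (L, K) := by
  simpa using rowInsertWord_append_of_dominates (A := []) hL h

theorem rowInsertWord_flatten {rows : List (List ℕ)} {L : List ℕ} (hrows : ∀ r ∈ rows, IsRow r)
    (hL : IsRow L) (hc : (rows ++ [L]).IsChain Dominates) :
    rowInsertWord [] (rows ++ [L]).flatten = (L, rows.flatten) := by
  induction rows using List.reverseRecOn generalizing L with
  | nil => simpa using rowInsertWord_of_dominates hL (dominates_nil L)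
  | append_singleton rows K ih =>
    have hK : Dominates K L := (List.isChain_append.1 hc).2.2 K (by simp) L (by simp)
    rw [List.flatten_append, rowInsertWord_append,
      ih (fun r hr => hrows r (by simp [hr])) (hrows K (by simp)) hc.left_of_append]
    simp [rowInsertWord_of_dominates hL hK]

def insertionTableau : List ℕ → List (List ℕ)
  | [] => []
  | x :: w =>
    insertionTableau (rowInsertWord [] (x :: w)).2 ++ [(rowInsertWord [] (x :: w)).1]
termination_by w => w.length
decreasing_by exact length_rowInsertWord_snd_lt (List.cons_ne_nil x w)

theorem insertionTableau_of_ne_nil {w : List ℕ} (h : w ≠ []) :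
    insertionTableau w = insertionTableau (rowInsertWord [] w).2 ++ [(rowInsertWord [] w).1] := by
  obtain ⟨x, w, rfl⟩ := List.exists_cons_of_ne_nil h
  rw [insertionTableau]

theorem placticEq_flatten_insertionTableau (w : List ℕ) :
    PlacticEq w (insertionTableau w).flatten := by
  by_cases h : w = []
  · simpa [h, insertionTableau] using PlacticEq.refl []
  rw [insertionTableau_of_ne_nil h, List.flatten_append, List.flatten_singleton]
  simpa using (placticEq_rowInsertWord List.Pairwise.nil w).trans
    ((placticEq_flatten_insertionTableau _).append (.refl _))
termination_by w.length
decreasing_by exact length_rowInsertWord_snd_lt h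

theorem ne_nil_and_isRow_of_mem_insertionTableau {w r : List ℕ} (hr : r ∈ insertionTableau w) :
    r ≠ [] ∧ IsRow r := by
  by_cases h : w = []
  · simp [h, insertionTableau] at hr
  rw [insertionTableau_of_ne_nil h, List.mem_append, List.mem_singleton] at hr
  rcases hr with hr | rfl
  · exact ne_nil_and_isRow_of_mem_insertionTableau hr
  · have hlen := length_rowInsertWord [] w
    have hlt := length_rowInsertWord_snd_lt h
    rw [List.length_nil, zero_add] at hlen
    exact ⟨List.ne_nil_of_length_pos (by omega), isRow_rowInsertWord List.Pairwise.nil w⟩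
termination_by w.length
decreasing_by exact length_rowInsertWord_snd_lt h

theorem isChain_insertionTableau (w : List ℕ) : (insertionTableau w).IsChain Dominates := by
  by_cases h : w = []
  · simp [h, insertionTableau]
  rw [insertionTableau_of_ne_nil h]
  refine (isChain_insertionTableau _).append (.singleton _) fun K hK L hL => ?_
  have hb : (rowInsertWord [] w).2 ≠ [] := by
    rintro hb
    simp [hb, insertionTableau] at hK
  rw [insertionTableau_of_ne_nil hb] at hK
  simp only [List.getLast?_append, List.getLast?_singleton, Option.some_or, Option.mem_def,
    Option.some.injEq, List.head?_cons] at hK hL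
  subst hK hL
  exact (dominates_nil []).rowInsertWord_rowInsertWord w
termination_by w.length
decreasing_by exact length_rowInsertWord_snd_lt h

theorem insertionTableau_flatten {rows : List (List ℕ)} (hrows : ∀ r ∈ rows, r ≠ [] ∧ IsRow r)
    (hc : rows.IsChain Dominates) : insertionTableau rows.flatten = rows := by
  induction rows using List.reverseRecOn with
  | nil => simp [insertionTableau]
  | append_singleton rows L ih =>
    obtain ⟨hLne, hL⟩ := hrows L (by simp)
    have hne : (rows ++ [L]).flatten ≠ [] := by simp [hLne]
    rw [insertionTableau_of_ne_nil hne,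
      rowInsertWord_flatten (fun r hr => (hrows r (by simp [hr])).2) hL hc,
      ih (fun r hr => hrows r (by simp [hr])) hc.left_of_append]

theorem insertionTableau_eq_of_placticEq {u v : List ℕ} (h : PlacticEq u v) :
    insertionTableau u = insertionTableau v := by
  by_cases hu : u = []
  · rw [hu, List.Perm.nil_eq (hu ▸ h.perm)]
  have hv : v ≠ [] := fun hv => hu (List.Perm.eq_nil (hv ▸ h.perm))
  obtain ⟨hrow, hbump⟩ := h.rowInsertEquiv [] List.Pairwise.nil
  rw [insertionTableau_of_ne_nil hu, insertionTableau_of_ne_nil hv, hrow,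
    insertionTableau_eq_of_placticEq hbump]
termination_by u.length
decreasing_by exact length_rowInsertWord_snd_lt hu

/-- Young tableaux are normal forms for the plactic monoid on `{1, …, n}`:
every word is Knuth-equivalent to exactly one Young tableau word. -/
theorem tableaux_are_normal_forms (n : ℕ) (w : List ℕ)
    (hw : ∀ a ∈ w, 1 ≤ a ∧ a ≤ n) :
    ∃! t : List ℕ, IsTableauWord n t ∧ PlacticEq w t := by
  have hP := placticEq_flatten_insertionTableau w
  refine ⟨(insertionTableau w).flatten, ⟨⟨insertionTableau w, rfl, fun r hr => ?_,
    isChain_insertionTableau w⟩, hP⟩, ?_⟩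
  · obtain ⟨hne, hrow⟩ := ne_nil_and_isRow_of_mem_insertionTableau hr
    exact ⟨hne, hrow, fun a ha => hw a (hP.perm.mem_iff.2 (List.mem_flatten_of_mem hr ha))⟩
  rintro t ⟨⟨rows, rfl, hrows, hc⟩, hwt⟩
  rw [insertionTableau_eq_of_placticEq hwt,
    insertionTableau_flatten (fun r hr => ⟨(hrows r hr).1, (hrows r hr).2.1⟩) hc]
end
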